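/- Let G = (V, E, w) be a weighted undirected graph with positive edge weights, and let H be the Thorup–Zwick-style hopset built from a hierarchy V = V_0 ⊇ V_1 ⊇ ⋯ ⊇ V_k ⊇ V_{k+1} = ∅ with pivots and bunches as defined below (k ≥ 1). Then for any real μ > 0 and any pair u, v ∈ V with dist_G(u, v) ≤ μ, at least one of the following holds: (i) dist_{G∪H}^{(1)}(u, v) = dist_G(u, v); (ii) there exists u' ∈ V_1 such that dist_{G∪H}^{(1)}(u, u') ≤ μ. -/

import Mathlib

open scoped ENNReal
open Classical

/-- Hop-bounded distance: minimum total weight of a walk with at most `β` edges. -/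
noncomputable def hopDist {V : Type*} (w : V → V → ℝ≥0∞) : ℕ → V → V → ℝ≥0∞
  | 0, u, v => if u = v then 0 else ⊤
  | β + 1, u, v => hopDist w β u v ⊓ ⨅ x, w u x + hopDist w β x v

/-- Shortest-path distance (infimum over all hop bounds). -/
noncomputable def gdist {V : Type*} (w : V → V → ℝ≥0∞) (u v : V) : ℝ≥0∞ :=
  ⨅ β, hopDist w β u v

/-- The graph `G ∪ H`: add each edge of `H` with weight equal to the `G`-distance
between its endpoints. -/
noncomputable def addShortcuts {V : Type*} (w : V → V → ℝ≥0∞) (H : Set (V × V)) :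
    V → V → ℝ≥0∞ :=
  fun u v => w u v ⊓ (if (u, v) ∈ H ∨ (v, u) ∈ H then gdist w u v else ⊤)

/-- Distance from `v` to its level-`j` pivot `p j v`; by convention it is `⊤`
for `j = k+1` (the pivot `p (k+1) v` does not exist). -/
noncomputable def pivotDist {V : Type*} (w : V → V → ℝ≥0∞) (p : ℕ → V → V) (k : ℕ)
    (j : ℕ) (v : V) : ℝ≥0∞ :=
  if j ≤ k then gdist w v (p j v) else ⊤

/-- The Thorup–Zwick-style hopset: for each `i ∈ [0,k]` and each vertex `v` of level
exactly `i` (i.e. `v ∈ Vs i \ Vs (i+1)`), add the edges from `v` to all vertices of its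
bunch `B(v) = {u ∈ Vs i : dist(v,u) < dist(v, p (i+1) v)}` and (when `i < k`) to its
pivot `p (i+1) v`. -/
def tzHopset {V : Type*} (w : V → V → ℝ≥0∞) (Vs : ℕ → Set V) (p : ℕ → V → V) (k : ℕ) :
    Set (V × V) :=
  { e | ∃ i ≤ k, e.1 ∈ Vs i ∧ e.1 ∉ Vs (i + 1) ∧
        ((e.2 ∈ Vs i ∧ gdist w e.1 e.2 < pivotDist w p k (i + 1) e.1) ∨
          (i < k ∧ e.2 = p (i + 1) e.1)) }

/-! A vertex `u ∉ V₁` has level 0, so `H` joins it to its pivot `p₁(u)` and to every vertex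
strictly closer than `p₁(u)`, each by an edge of weight equal to the `G`-distance. If
`dist(u,v) < dist(u,p₁(u))` the edge `(u,v)` realises (i); otherwise the pivot edge gives (ii)
with `u' = p₁(u)`, since `dist(u,p₁(u)) ≤ dist(u,v) ≤ μ`. If `u ∈ V₁`, take `u' = u`. -/

section HopDist

variable {V : Type*} (w : V → V → ℝ≥0∞)

lemma hopDist_self (β : ℕ) (u : V) : hopDist w β u u = 0 := by
  induction β with
  | zero => simp [hopDist]
  | succ β ih => exact le_antisymm (inf_le_left.trans ih.le) zero_le

lemma hopDist_one (u v : V) : hopDist w 1 u v = if u = v then 0 else w u v := by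
  have hedge : ⨅ x, w u x + hopDist w 0 x v = w u v :=
    le_antisymm ((iInf_le _ v).trans (by simp [hopDist]))
      (le_iInf fun x => by by_cases hx : x = v <;> simp [hopDist, hx])
  rw [hopDist, hedge]
  split_ifs with h <;> simp [hopDist, h]

lemma gdist_le_hopDist (β : ℕ) (u v : V) : gdist w u v ≤ hopDist w β u v :=
  iInf_le _ _

lemma gdist_le_weight (u v : V) : gdist w u v ≤ w u v := by
  refine (gdist_le_hopDist w 1 u v).trans ?_
  rw [hopDist_one]
  split_ifs <;> simp

end HopDist

section Shortcuts

variable {V : Type*} (w : V → V → ℝ≥0∞) (H : Set (V × V))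

lemma gdist_le_addShortcuts (u v : V) : gdist w u v ≤ addShortcuts w H u v := by
  refine le_inf (gdist_le_weight w u v) ?_
  split_ifs <;> simp

lemma addShortcuts_le_gdist_of_mem {u v : V} (huv : (u, v) ∈ H) :
    addShortcuts w H u v ≤ gdist w u v :=
  inf_le_right.trans (by rw [if_pos (Or.inl huv)])

lemma gdist_le_hopDist_one_addShortcuts (u v : V) :
    gdist w u v ≤ hopDist (addShortcuts w H) 1 u v := by
  rw [hopDist_one]
  split_ifs with h
  · subst h
    simpa [hopDist_self] using gdist_le_hopDist w 0 u u
  · exact gdist_le_addShortcuts w H u v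

lemma hopDist_one_addShortcuts_le_gdist_of_mem {u v : V} (huv : (u, v) ∈ H) :
    hopDist (addShortcuts w H) 1 u v ≤ gdist w u v := by
  rw [hopDist_one]
  split_ifs
  · exact zero_le
  · exact addShortcuts_le_gdist_of_mem w H huv

lemma hopDist_one_addShortcuts_eq_gdist_of_mem {u v : V} (huv : (u, v) ∈ H) :
    hopDist (addShortcuts w H) 1 u v = gdist w u v :=
  le_antisymm (hopDist_one_addShortcuts_le_gdist_of_mem w H huv)
    (gdist_le_hopDist_one_addShortcuts w H u v)

end Shortcuts

section TZHopset

variable {V : Type*} (w : V → V → ℝ≥0∞) (Vs : ℕ → Set V) (p : ℕ → V → V) {k i : ℕ}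

lemma mem_tzHopset_of_mem_bunch (hi : i ≤ k) {u v : V} (hu : u ∈ Vs i) (hu' : u ∉ Vs (i + 1))
    (hv : v ∈ Vs i) (huv : gdist w u v < pivotDist w p k (i + 1) u) :
    (u, v) ∈ tzHopset w Vs p k :=
  ⟨i, hi, hu, hu', Or.inl ⟨hv, huv⟩⟩

lemma mem_tzHopset_pivot (hi : i < k) {u : V} (hu : u ∈ Vs i) (hu' : u ∉ Vs (i + 1)) :
    (u, p (i + 1) u) ∈ tzHopset w Vs p k :=
  ⟨i, hi.le, hu, hu', Or.inr ⟨hi, rfl⟩⟩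

end TZHopset

theorem tz_hopset_base_case_general
    (V : Type) (w : V → V → ℝ≥0∞)
    (k : ℕ) (hk : 1 ≤ k)
    (Vs : ℕ → Set V)
    (hV0 : Vs 0 = Set.univ)
    (p : ℕ → V → V)
    (hpivot : ∀ i, 1 ≤ i → i ≤ k → ∀ v : V,
      p i v ∈ Vs i ∧ gdist w v (p i v) = ⨅ x ∈ Vs i, gdist w v x)
    (μ : ℝ) (u v : V)
    (hd : gdist w u v ≤ ENNReal.ofReal μ) :
    hopDist (addShortcuts w (tzHopset w Vs p k)) 1 u v = gdist w u v ∨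
    (∃ u' ∈ Vs 1,
      hopDist (addShortcuts w (tzHopset w Vs p k)) 1 u u' ≤ ENNReal.ofReal μ) := by
  set H := tzHopset w Vs p k
  by_cases hu1 : u ∈ Vs 1
  · exact Or.inr ⟨u, hu1, by simp [hopDist_self]⟩
  have hu0 : u ∈ Vs 0 := hV0 ▸ Set.mem_univ u
  by_cases hbunch : gdist w u v < pivotDist w p k 1 u
  · exact Or.inl <| hopDist_one_addShortcuts_eq_gdist_of_mem w H <|
      mem_tzHopset_of_mem_bunch w Vs p (Nat.zero_le k) hu0 hu1 (hV0 ▸ Set.mem_univ v) hbunch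
  · refine Or.inr ⟨p 1 u, (hpivot 1 le_rfl hk u).1, ?_⟩
    calc hopDist (addShortcuts w H) 1 u (p 1 u) ≤ gdist w u (p 1 u) :=
          hopDist_one_addShortcuts_le_gdist_of_mem w H (mem_tzHopset_pivot w Vs p hk hu0 hu1)
      _ = pivotDist w p k 1 u := (if_pos hk).symm
      _ ≤ gdist w u v := not_lt.mp hbunch
      _ ≤ ENNReal.ofReal μ := hd

/-- The base case of the stretch analysis of the Thorup–Zwick-style
hopset: for every `μ > 0` and every pair `u, v` with `dist(u,v) ≤ μ`, either
`dist^{(1)}_{G∪H}(u,v) = dist(u,v)`, or some `u' ∈ V_1` satisfies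
`dist^{(1)}_{G∪H}(u,u') ≤ μ`. -/
theorem tz_hopset_base_case
    (V : Type) [Fintype V] (w : V → V → ℝ≥0∞)
    (hsymm : ∀ u v : V, w u v = w v u) (hpos : ∀ u v : V, 0 < w u v)
    (k : ℕ) (hk : 1 ≤ k)
    (Vs : ℕ → Set V)
    (hV0 : Vs 0 = Set.univ) (hVlast : Vs (k + 1) = ∅)
    (hnested : ∀ i ≤ k, Vs (i + 1) ⊆ Vs i)
    (p : ℕ → V → V)
    (hpivot : ∀ i, 1 ≤ i → i ≤ k → ∀ v : V,
      p i v ∈ Vs i ∧ gdist w v (p i v) = ⨅ x ∈ Vs i, gdist w v x)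
    (μ : ℝ) (hμ : 0 < μ) (u v : V)
    (hd : gdist w u v ≤ ENNReal.ofReal μ) :
    hopDist (addShortcuts w (tzHopset w Vs p k)) 1 u v = gdist w u v ∨
    (∃ u' ∈ Vs 1,
      hopDist (addShortcuts w (tzHopset w Vs p k)) 1 u u' ≤ ENNReal.ofReal μ) :=
  tz_hopset_base_case_general V w k hk Vs hV0 p hpivot μ u v hd
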